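/- For any digraph F, the limit lim_{t→∞} χ_dir(F^{∧t})^{1/t} exists and equals r_D(F). -/

import Mathlib

open Filter

/-- The AND product of two digraphs given by edge relations `E` and `F`. -/
def andProd {V W : Type*} (E : V → V → Prop) (F : W → W → Prop) :
    V × W → V × W → Prop :=
  fun p q => p ≠ q ∧ (p.1 = q.1 ∨ E p.1 q.1) ∧ (p.2 = q.2 ∨ F p.2 q.2)

/-- The `t`-th AND power of the digraph given by edge relation `E`. -/
def andPow {V : Type*} (E : V → V → Prop) (t : ℕ) :
    (Fin t → V) → (Fin t → V) → Prop :=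
  fun x y => x ≠ y ∧ ∀ i, x i = y i ∨ E (x i) (y i)

/-- Chromatic number of a digraph: minimum number of classes in a partition of the
vertex set into sets containing no edge in either direction. -/
noncomputable def chromNum {V : Type*} (E : V → V → Prop) : ℕ :=
  sInf {n : ℕ | ∃ c : V → Fin n, ∀ u v : V, E u v → c u ≠ c v}

/-- Independence number of a digraph: maximum size of a vertex set with no edge
in either direction between its elements. -/
noncomputable def indepNum {V : Type*} (E : V → V → Prop) : ℕ :=
  sSup {n : ℕ | ∃ S : Finset V, S.card = n ∧ ∀ u ∈ S, ∀ v ∈ S, u ≠ v → ¬ E u v}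

/-- A set of vertices is acyclic if the induced subdigraph contains no directed
closed walk (equivalently, for finite digraphs, no directed cycle). -/
def IsAcyclicSet {V : Type*} (E : V → V → Prop) (U : Set V) : Prop :=
  ¬ ∃ (n : ℕ) (c : Fin (n + 1) → V), (∀ i, c i ∈ U) ∧ ∀ i, E (c i) (c (i + 1))

/-- Dichromatic number: minimum number of acyclic sets covering the vertex set. -/
noncomputable def dichromNum {V : Type*} (E : V → V → Prop) : ℕ :=
  sInf {n : ℕ | ∃ c : V → Fin n, ∀ k : Fin n, IsAcyclicSet E {v | c v = k}}

/-- Acyclicity number: maximum size of an acyclic subset of the vertex set. -/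
noncomputable def acycNum {V : Type*} (E : V → V → Prop) : ℕ :=
  sSup {n : ℕ | ∃ U : Finset V, U.card = n ∧ IsAcyclicSet E (↑U : Set V)}

/-- Fractional dichromatic number: minimum total weight of a fractional directed
coloring, i.e. nonnegative weights on acyclic sets covering each vertex with
total weight at least 1. -/
noncomputable def fracDichromNum {V : Type*} [Fintype V] (E : V → V → Prop) : ℝ :=
  letI := Classical.decEq V
  sInf {w : ℝ | ∃ g : Finset V → ℝ,
    (∀ U, 0 ≤ g U) ∧
    (∀ U : Finset V, ¬ IsAcyclicSet E (↑U : Set V) → g U = 0) ∧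
    (∀ v : V, 1 ≤ ∑ U : Finset V, (if v ∈ U then g U else 0)) ∧
    w = ∑ U : Finset V, g U}

/-- A digraph is vertex-transitive if any vertex can be mapped to any other by an
automorphism. -/
def VertexTransitive {V : Type*} (E : V → V → Prop) : Prop :=
  ∀ u v : V, ∃ σ : Equiv.Perm V, (∀ a b : V, E (σ a) (σ b) ↔ E a b) ∧ σ u = v

/-- The (undirected, viewed as symmetric) closure graph of a digraph: distinct
vertices `a, b` are adjacent iff `(a,b)` or `(b,a)` is an edge, or `a` and `b`
have a common out-neighbour. -/
def closureRel {V : Type*} (E : V → V → Prop) : V → V → Prop :=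
  fun a b => a ≠ b ∧ (E a b ∨ E b a ∨ ∃ v, E a v ∧ E b v)

section AuxStmt9
set_option linter.unusedSectionVars false
set_option linter.unusedVariables false

variable {W : Type*} [Fintype W] [Nonempty W] {R : W → W → Prop}

lemma chromNum_le_card' {C : Type*} [Fintype C] (c : W → C)
    (hc : ∀ u v, R u v → c u ≠ c v) : chromNum R ≤ Fintype.card C := by
  apply Nat.sInf_le
  exact ⟨fun w => Fintype.equivFin C (c w), fun u v h huv =>
    hc u v h ((Fintype.equivFin C).injective huv)⟩

lemma chromNum_spec' (hR : ∀ v, ¬ R v v) :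
    ∃ c : W → Fin (chromNum R), ∀ u v : W, R u v → c u ≠ c v :=
  Nat.sInf_mem (⟨Fintype.card W, Fintype.equivFin W, fun u v h hc => hR v
    (((Fintype.equivFin W).injective hc) ▸ h)⟩ :
    {n : ℕ | ∃ c : W → Fin n, ∀ u v : W, R u v → c u ≠ c v}.Nonempty)

lemma one_le_chromNum' (hR : ∀ v, ¬ R v v) : 1 ≤ chromNum R := by
  by_contra h
  push_neg at h
  interval_cases h' : chromNum R
  · obtain ⟨c, -⟩ := chromNum_spec' (R := R) hR
    rw [h'] at c
    exact (c (Classical.arbitrary W)).elim0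

lemma dichromNum_spec' (hR : ∀ v, ¬ R v v) :
    ∃ c : W → Fin (dichromNum R), ∀ k, IsAcyclicSet R {v | c v = k} := by
  have hne : {n : ℕ | ∃ c : W → Fin n, ∀ k : Fin n, IsAcyclicSet R {v | c v = k}}.Nonempty := by
    refine ⟨Fintype.card W, Fintype.equivFin W, fun k hcyc => ?_⟩
    obtain ⟨n, c, hmem, hstep⟩ := hcyc
    have h0 := hmem 0; have h1 := hmem (0 + 1)
    simp only [Set.mem_setOf_eq] at h0 h1
    have h01 : c 0 = c (0 + 1) := (Fintype.equivFin W).injective (h0.trans h1.symm)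
    exact hR (c (0 + 1)) (h01 ▸ hstep 0)
  exact Nat.sInf_mem hne

lemma one_le_dichromNum' (hR : ∀ v, ¬ R v v) : 1 ≤ dichromNum R := by
  by_contra h
  push_neg at h
  interval_cases h' : dichromNum R
  · obtain ⟨c, -⟩ := dichromNum_spec' (R := R) hR
    rw [h'] at c
    exact (c (Classical.arbitrary W)).elim0

lemma dichromNum_le_chromNum' (hR : ∀ v, ¬ R v v) : dichromNum R ≤ chromNum R := by
  obtain ⟨c, hc⟩ := chromNum_spec' hR
  apply Nat.sInf_le
  refine ⟨c, fun k hcyc => ?_⟩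
  obtain ⟨n, d, hmem, hstep⟩ := hcyc
  have h0 := hmem 0; have h1 := hmem (0 + 1)
  simp only [Set.mem_setOf_eq] at h0 h1
  exact hc _ _ (hstep 0) (h0.trans h1.symm)

lemma andPow_irrefl' {V : Type*} (E : V → V → Prop) (t : ℕ) :
    ∀ x, ¬ andPow E t x x := fun _ h => h.1 rfl

lemma exists_path_of_transGen' {W : Type*} {r : W → W → Prop} {a b : W}
    (h : Relation.TransGen r a b) :
    ∃ (n : ℕ) (c : Fin (n + 1 + 1) → W), c 0 = a ∧ c (Fin.last (n + 1)) = b ∧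
      ∀ i : Fin (n + 1), r (c i.castSucc) (c i.succ) := by
  induction h with
  | @single b hab =>
    refine ⟨0, ![a, b], rfl, rfl, fun i => ?_⟩
    fin_cases i
    simpa using hab
  | @tail b c _ hbc ih =>
    obtain ⟨n, p, h0, hl, hs⟩ := ih
    refine ⟨n + 1, Fin.snoc p c, ?_, ?_, fun i => ?_⟩
    · rw [← Fin.castSucc_zero, Fin.snoc_castSucc]; exact h0
    · rw [Fin.snoc_last]
    · refine Fin.lastCases ?_ (fun j => ?_) i
      · rw [Fin.succ_last, Fin.snoc_last, Fin.snoc_castSucc, hl]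
        exact hbc
      · rw [Fin.succ_castSucc, Fin.snoc_castSucc, Fin.snoc_castSucc]
        exact hs j

lemma g_const_along' {W K : Type*} {r : W → W → Prop} {g : W → K}
    (hrg : ∀ x y, r x y → g x = g y) {N : ℕ} {c : Fin (N + 1) → W}
    (hs : ∀ i : Fin N, r (c i.castSucc) (c i.succ)) :
    ∀ j, g (c j) = g (c 0) := by
  have key : ∀ k (hk : k < N + 1), g (c ⟨k, hk⟩) = g (c 0) := by
    intro k
    induction k with
    | zero => intro hk; rfl
    | succ k IH =>
      intro hk
      have hkN : k < N := Nat.lt_of_succ_lt_succ hk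
      have step := hrg _ _ (hs ⟨k, hkN⟩)
      have e1 : (⟨k, hkN⟩ : Fin N).castSucc = ⟨k, Nat.lt_of_lt_of_le hkN (Nat.le_succ N)⟩ := rfl
      have e2 : (⟨k, hkN⟩ : Fin N).succ = ⟨k + 1, hk⟩ := rfl
      rw [e1, e2] at step
      rw [← step]
      exact IH _
  intro j
  have hj : j = ⟨j.val, j.isLt⟩ := by ext; rfl
  rw [hj]
  exact key j.val j.isLt

lemma transGen_irrefl' {W : Type*} {R : W → W → Prop} {k : ℕ} {g : W → Fin k}
    (hg : ∀ m : Fin k, IsAcyclicSet R {v | g v = m}) (y : W) :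
    ¬ Relation.TransGen (fun p q => R p q ∧ g p = g q) y y := by
  intro h
  obtain ⟨n, p, h0, hl, hs⟩ := exists_path_of_transGen' h
  have hgconst : ∀ j, g (p j) = g y := by
    intro j
    rw [← h0]
    exact g_const_along' (fun x y (hxy : R x y ∧ g x = g y) => hxy.2) hs j
  refine hg (g y) ⟨n, fun i : Fin (n + 1) => p i.castSucc, fun i => hgconst _, fun i => ?_⟩
  show R (p i.castSucc) (p (i + 1 : Fin (n + 1)).castSucc)
  by_cases hi : i = Fin.last n
  · subst hi
    rw [Fin.last_add_one, Fin.castSucc_zero, h0, ← hl]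
    have := (hs (Fin.last n)).1
    rwa [Fin.succ_last] at this
  · have hilt : i < Fin.last n := lt_of_le_of_ne (Fin.le_last i) hi
    have hv : (i + 1 : Fin (n + 1)).val = i.val + 1 := Fin.val_add_one_of_lt hilt
    have e2 : (i + 1 : Fin (n + 1)).castSucc = i.succ := by
      ext; simp [hv]
    rw [e2]
    exact (hs i).1

variable {V : Type*} [Fintype V] [Nonempty V] (E : V → V → Prop)

lemma chromNum_andPow_add' (s t : ℕ) :
    chromNum (andPow E (s + t)) ≤ chromNum (andPow E s) * chromNum (andPow E t) := by
  obtain ⟨c1, hc1⟩ := chromNum_spec' (andPow_irrefl' E s)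
  obtain ⟨c2, hc2⟩ := chromNum_spec' (andPow_irrefl' E t)
  have key := chromNum_le_card' (R := andPow E (s + t))
    (fun x => (c1 (fun i => x (Fin.castAdd t i)), c2 (fun i => x (Fin.natAdd s i))))
    (by
      rintro x y ⟨hne, hco⟩ hc
      have h1 : (fun i => x (Fin.castAdd t i)) = (fun i => y (Fin.castAdd t i)) := by
        by_contra hne1
        exact hc1 _ _ ⟨hne1, fun i => hco _⟩ (congrArg Prod.fst hc)
      have h2 : (fun i => x (Fin.natAdd s i)) = (fun i => y (Fin.natAdd s i)) := by
        by_contra hne2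
        exact hc2 _ _ ⟨hne2, fun i => hco _⟩ (congrArg Prod.snd hc)
      apply hne
      funext i
      refine Fin.addCases (fun j => ?_) (fun j => ?_) i
      · exact congrFun h1 j
      · exact congrFun h2 j)
  simpa using key

lemma chromNum_andPow_mul' (s t : ℕ) :
    chromNum (andPow E (s * t)) ≤
      (dichromNum (andPow E s)) ^ t * (t * (Fintype.card (Fin s → V) - 1) + 1) := by
  classical
  obtain ⟨g, hg⟩ := dichromNum_spec' (andPow_irrefl' E s)
  set rel : (Fin s → V) → (Fin s → V) → Prop :=
    fun p q => andPow E s p q ∧ g p = g q with hrel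
  have hirr : ∀ y, ¬ Relation.TransGen rel y y := transGen_irrefl' hg
  set f : (Fin s → V) → ℕ :=
    fun y => (Finset.univ.filter (fun z => Relation.TransGen rel z y)).card with hf
  have hmono : ∀ y z, rel y z → f y < f z := by
    intro y z hyz
    apply Finset.card_lt_card
    constructor
    · intro w hw
      simp only [Finset.mem_filter, Finset.mem_univ, true_and] at hw ⊢
      exact hw.tail hyz
    · intro hsub
      have hy : y ∈ Finset.univ.filter (fun z' => Relation.TransGen rel z' z) := by
        simp only [Finset.mem_filter, Finset.mem_univ, true_and]
        exact Relation.TransGen.single hyz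
      have hmem := hsub hy
      simp only [Finset.mem_filter, Finset.mem_univ, true_and] at hmem
      exact hirr y hmem
  have hfb : ∀ y, f y ≤ Fintype.card (Fin s → V) - 1 := by
    intro y
    have hsub : Finset.univ.filter (fun z => Relation.TransGen rel z y) ⊆
        Finset.univ.erase y := by
      intro w hw
      simp only [Finset.mem_filter, Finset.mem_univ, true_and] at hw
      apply Finset.mem_erase_of_ne_of_mem _ (Finset.mem_univ w)
      rintro rfl
      exact hirr w hw
    have hcard := Finset.card_le_card hsub
    rw [Finset.card_erase_of_mem (Finset.mem_univ y), Finset.card_univ] at hcard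
    exact hcard
  let e : Fin (s * t) ≃ Fin t × Fin s := (finCongr (mul_comm s t)).trans finProdFinEquiv.symm
  let blk : (Fin (s * t) → V) → Fin t → Fin s → V := fun x j i => x (e.symm (j, i))
  have hblk_inj : ∀ x y : Fin (s * t) → V, (∀ j, blk x j = blk y j) → x = y := by
    intro x y h
    funext i
    have h2 := congrFun (h (e i).1) (e i).2
    simpa [blk] using h2
  have hedge : ∀ x y, andPow E (s * t) x y →
      ∀ j, blk x j = blk y j ∨ andPow E s (blk x j) (blk y j) := by
    rintro x y ⟨hne, hco⟩ j
    by_cases h : blk x j = blk y j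
    · exact Or.inl h
    · exact Or.inr ⟨h, fun i => hco (e.symm (j, i))⟩
  set B := t * (Fintype.card (Fin s → V) - 1) + 1 with hB
  have hsum : ∀ x, (∑ j, f (blk x j)) < B := by
    intro x
    have h1 : (∑ j, f (blk x j)) ≤ ∑ _j : Fin t, (Fintype.card (Fin s → V) - 1) :=
      Finset.sum_le_sum (fun j _ => hfb _)
    simp only [Finset.sum_const, Finset.card_univ, Fintype.card_fin, smul_eq_mul] at h1
    omega
  let col : (Fin (s * t) → V) → (Fin t → Fin (dichromNum (andPow E s))) × Fin B :=
    fun x => (fun j => g (blk x j), ⟨∑ j, f (blk x j), hsum x⟩)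
  have hproper : ∀ x y, andPow E (s * t) x y → col x ≠ col y := by
    intro x y hxy hc
    have hg_eq : ∀ j, g (blk x j) = g (blk y j) :=
      fun j => congrFun (congrArg Prod.fst hc) j
    have hsum_eq : (∑ j, f (blk x j)) = ∑ j, f (blk y j) :=
      congrArg (fun z => (Prod.snd z : Fin B).val) hc
    have hle : ∀ j, f (blk x j) ≤ f (blk y j) := by
      intro j
      rcases hedge x y hxy j with h | h
      · rw [h]
      · exact (hmono _ _ ⟨h, hg_eq j⟩).le
    obtain ⟨j0, hj0⟩ : ∃ j, blk x j ≠ blk y j := by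
      by_contra hall
      push_neg at hall
      exact hxy.1 (hblk_inj x y hall)
    have hlt : f (blk x j0) < f (blk y j0) := by
      rcases hedge x y hxy j0 with h | h
      · exact absurd h hj0
      · exact hmono _ _ ⟨h, hg_eq j0⟩
    have hslt := Finset.sum_lt_sum (fun j (_ : j ∈ Finset.univ) => hle j)
      ⟨j0, Finset.mem_univ _, hlt⟩
    omega
  have key := chromNum_le_card' col hproper
  simpa [Fintype.card_prod, Fintype.card_fun, Fintype.card_fin] using key

end AuxStmt9
/-- lim χ_dir(F^{∧t})^{1/t} exists and equals r_D(F). -/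
theorem stmt9 {V : Type*} [Fintype V] [Nonempty V]
    (E : V → V → Prop) (hE : ∀ v, ¬ E v v) :
    ∃ r : ℝ,
      Tendsto (fun t : ℕ => (chromNum (andPow E t) : ℝ) ^ (1 / (t : ℝ))) atTop (nhds r) ∧
      Tendsto (fun t : ℕ => (dichromNum (andPow E t) : ℝ) ^ (1 / (t : ℝ))) atTop (nhds r) := by
  classical
  set A : ℕ → ℕ := fun t => chromNum (andPow E t) with hA
  set B : ℕ → ℕ := fun t => dichromNum (andPow E t) with hB
  have hA1 : ∀ t, 1 ≤ A t := fun t => one_le_chromNum' (andPow_irrefl' E t)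
  have hB1 : ∀ t, 1 ≤ B t := fun t => one_le_dichromNum' (andPow_irrefl' E t)
  have hBA : ∀ t, B t ≤ A t := fun t => dichromNum_le_chromNum' (andPow_irrefl' E t)
  have hApos : ∀ t, (0 : ℝ) < A t := fun t => by exact_mod_cast hA1 t
  have hBpos : ∀ t, (0 : ℝ) < B t := fun t => by exact_mod_cast hB1 t
  set L : ℕ → ℝ := fun t => Real.log (A t) with hL
  have hL0 : ∀ t, 0 ≤ L t := fun t => Real.log_nonneg (by exact_mod_cast hA1 t)
  have hsub : Subadditive L := by
    intro m n
    have h1 : A (m + n) ≤ A m * A n := chromNum_andPow_add' E m n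
    have h2 : (A (m + n) : ℝ) ≤ (A m : ℝ) * (A n : ℝ) := by exact_mod_cast h1
    calc L (m + n) ≤ Real.log ((A m : ℝ) * (A n : ℝ)) :=
          Real.log_le_log (hApos _) h2
      _ = L m + L n := Real.log_mul (ne_of_gt (hApos m)) (ne_of_gt (hApos n))
  have hbdd : BddBelow (Set.range fun n => L n / n) := by
    refine ⟨0, ?_⟩
    rintro x ⟨n, rfl⟩
    exact div_nonneg (hL0 n) (Nat.cast_nonneg n)
  have hlim := hsub.tendsto_lim hbdd
  refine ⟨Real.exp hsub.lim, ?_, ?_⟩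
  case _ =>
    refine (Real.continuous_exp.continuousAt.tendsto.comp hlim).congr' ?_
    filter_upwards [eventually_ge_atTop 1] with t ht
    have : (A t : ℝ) ^ (1 / (t : ℝ)) = Real.exp (Real.log (A t) * (1 / (t : ℝ))) :=
      Real.rpow_def_of_pos (hApos t) _
    rw [this, mul_one_div]
    rfl
  case _ =>
    have hkey : ∀ s : ℕ, 1 ≤ s → hsub.lim ≤ Real.log (B s) / s := by
      intro s hs
      have hspos : (0 : ℝ) < s := by exact_mod_cast hs
      set C : ℕ := Fintype.card (Fin s → V) - 1 with hC
      have hstep : ∀ u : ℕ, 1 ≤ u →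
          hsub.lim ≤ Real.log (B s) / s + Real.log ((C : ℝ) * u + 1) / (s * u) := by
        intro u hu
        have hupos : (0 : ℝ) < u := by exact_mod_cast hu
        have hsu : s * u ≠ 0 := Nat.mul_ne_zero (by omega) (by omega)
        have h1 : hsub.lim ≤ L (s * u) / (s * u : ℕ) := hsub.lim_le_div hbdd hsu
        have hmul : A (s * u) ≤ (B s) ^ u * (u * C + 1) := chromNum_andPow_mul' E s u
        have h2 : L (s * u) ≤ u * Real.log (B s) + Real.log ((C : ℝ) * u + 1) := by
          have hcast : (A (s * u) : ℝ) ≤ (B s : ℝ) ^ u * ((C : ℝ) * u + 1) := by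
            have : ((B s) ^ u * (u * C + 1) : ℕ) = ((B s : ℝ) ^ u * ((C : ℝ) * u + 1) : ℝ) := by
              push_cast; ring
            rw [← this]
            exact_mod_cast hmul
          have hlog := Real.log_le_log (hApos _) hcast
          rwa [Real.log_mul (pow_ne_zero u (ne_of_gt (hBpos s))) (by positivity), Real.log_pow] at hlog
        calc hsub.lim ≤ L (s * u) / (s * u : ℕ) := h1
          _ ≤ (u * Real.log (B s) + Real.log ((C : ℝ) * u + 1)) / (s * u : ℕ) := by
              have hp : (0 : ℝ) < ((s * u : ℕ) : ℝ) := by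
                exact_mod_cast Nat.pos_of_ne_zero hsu
              exact (div_le_div_iff_of_pos_right hp).mpr h2
          _ = Real.log (B s) / s + Real.log ((C : ℝ) * u + 1) / (s * u) := by
              push_cast
              field_simp
      have htend0 : Tendsto (fun u : ℕ => Real.log ((C : ℝ) * u + 1) / (s * u)) atTop (nhds 0) := by
        have hlogid : Tendsto (fun x : ℝ => Real.log x / x) atTop (nhds 0) :=
          Real.isLittleO_log_id_atTop.tendsto_div_nhds_zero
        have h1 : Tendsto (fun u : ℕ => Real.log ((u : ℝ)) / (u : ℝ)) atTop (nhds 0) :=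
          hlogid.comp tendsto_natCast_atTop_atTop
        have h2' : Tendsto (fun u : ℕ => Real.log ((C : ℝ) + 1) / (u : ℝ)) atTop (nhds 0) :=
          tendsto_const_div_atTop_nhds_zero_nat _
        have h3 : Tendsto (fun u : ℕ =>
            (1 / (s : ℝ)) * (Real.log ((C : ℝ) + 1) / u + Real.log (u : ℝ) / u))
            atTop (nhds 0) := by
          have := (h2'.add h1).const_mul (1 / (s : ℝ))
          simpa using this
        refine tendsto_of_tendsto_of_tendsto_of_le_of_le' tendsto_const_nhds h3 ?_ ?_
        · filter_upwards [eventually_ge_atTop 1] with u hu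
          have hu1 : (1 : ℝ) ≤ (C : ℝ) * u + 1 := by
            have h0 : (0 : ℝ) ≤ (C : ℝ) * u := by positivity
            linarith
          exact div_nonneg (Real.log_nonneg hu1) (by positivity)
        · filter_upwards [eventually_ge_atTop 1] with u hu
          have hupos : (0 : ℝ) < (u : ℝ) := by exact_mod_cast hu
          have hu' : (1 : ℝ) ≤ (u : ℝ) := by exact_mod_cast hu
          have harg : (C : ℝ) * u + 1 ≤ ((C : ℝ) + 1) * u := by nlinarith
          have hlog : Real.log ((C : ℝ) * u + 1) ≤ Real.log ((C : ℝ) + 1) + Real.log u := by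
            calc Real.log ((C : ℝ) * u + 1) ≤ Real.log (((C : ℝ) + 1) * u) :=
                  Real.log_le_log (by positivity) harg
              _ = _ := Real.log_mul (by positivity) (ne_of_gt hupos)
          calc Real.log ((C : ℝ) * u + 1) / ((s : ℝ) * u)
              ≤ (Real.log ((C : ℝ) + 1) + Real.log u) / ((s : ℝ) * u) :=
                (div_le_div_iff_of_pos_right (by positivity)).mpr hlog
            _ = (1 / (s : ℝ)) * (Real.log ((C : ℝ) + 1) / u + Real.log (u : ℝ) / u) := by
                field_simp
                all_goals ring
      have htend : Tendsto (fun u : ℕ => Real.log (B s) / s + Real.log ((C : ℝ) * u + 1) / (s * u))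
          atTop (nhds (Real.log (B s) / s + 0)) := Tendsto.add tendsto_const_nhds htend0
      rw [add_zero] at htend
      refine ge_of_tendsto htend ?_
      filter_upwards [eventually_ge_atTop 1] with u hu
      exact hstep u hu
    have hlow : ∀ᶠ t in atTop, Real.exp hsub.lim ≤ (B t : ℝ) ^ (1 / (t : ℝ)) := by
      filter_upwards [eventually_ge_atTop 1] with t ht
      have h1 := hkey t ht
      have h2 : Real.exp hsub.lim ≤ Real.exp (Real.log (B t) / t) := Real.exp_le_exp.mpr h1
      rwa [Real.rpow_def_of_pos (hBpos t), mul_one_div]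
    have hup : ∀ᶠ t in atTop, (B t : ℝ) ^ (1 / (t : ℝ)) ≤ (A t : ℝ) ^ (1 / (t : ℝ)) := by
      refine Eventually.of_forall fun t => ?_
      apply Real.rpow_le_rpow (le_of_lt (hBpos t)) (by exact_mod_cast hBA t)
      positivity
    have hAtend : Tendsto (fun t : ℕ => (A t : ℝ) ^ (1 / (t : ℝ))) atTop
        (nhds (Real.exp hsub.lim)) := by
      refine (Real.continuous_exp.continuousAt.tendsto.comp hlim).congr' ?_
      filter_upwards [eventually_ge_atTop 1] with t ht
      rw [Real.rpow_def_of_pos (hApos t), mul_one_div]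
      rfl
    exact tendsto_of_tendsto_of_tendsto_of_le_of_le' tendsto_const_nhds hAtend hlow hup
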